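/- arXiv:math/0610628 — 2 statements merged into one kernel-verified Lean document; each statement's English description precedes it below -/
import Mathlib

section
/- If π is an irreducible permutation of {1,…,m} (i.e., π({1,…,k}) = {1,…,k} only for k = m), then the permutation aπ defined by aπ(j) = π(j) for j ≤ π⁻¹(m), aπ(j) = π(m) for j = π⁻¹(m)+1, and aπ(j) = π(j−1) for all other j, is also irreducible. -/
/-! Only the prefix of `aπ` up to `p = π⁻¹(m)` matters: there `aπ` agrees with `π`, so an initial
segment `{1,…,k}` with `k ≤ p` is not invariant because it is not invariant under `π`, and one with
`k > p` is not invariant because it contains `p`, which `aπ` sends to `m`. -/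

/-- A map `f` on `{0,…,m-1}` (0-based version of `{1,…,m}`) is irreducible if for every
`0 < k < m` the initial segment `{0,…,k-1}` is *not* invariant, i.e. some `j < k` has
`f j ≥ k`.  For a permutation this says `π({1,…,k}) = {1,…,k}` only for `k = m`. -/
def RauzyIrred {m : ℕ} (f : Fin m → Fin m) : Prop :=
  ∀ k : ℕ, 0 < k → k < m → ∃ j : Fin m, (j : ℕ) < k ∧ k ≤ (f j : ℕ)

theorem RauzyIrred.of_eq_on_le_of_apply_eq_last {m : ℕ} {g f : Fin m → Fin m}
    (hg : RauzyIrred g) (p : Fin m) (hp : (g p : ℕ) = m - 1)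
    (hfg : ∀ j : Fin m, (j : ℕ) ≤ p → f j = g j) : RauzyIrred f := by
  intro k hk hkm
  by_cases hkp : k ≤ p
  · obtain ⟨j, hjk, hkj⟩ := hg k hk hkm
    exact ⟨j, hjk, hfg j (by omega) ▸ hkj⟩
  · exact ⟨p, by omega, by rw [hfg p le_rfl]; omega⟩

/-- The Rauzy operation `a` preserves irreducibility. -/
theorem rauzy_a_irreducible {m : ℕ} (hm : 2 ≤ m) (π : Equiv.Perm (Fin m))
    (hπ : RauzyIrred π) (f : Fin m → Fin m)
    (h1 : ∀ j : Fin m, (j : ℕ) ≤ ((π.symm ⟨m - 1, by omega⟩ : Fin m) : ℕ) → f j = π j) :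
    RauzyIrred f :=
  hπ.of_eq_on_le_of_apply_eq_last _ (by simp) h1
end

section
/- Let (A_n)_{n≥1} be a sequence of m×m matrices with nonnegative integer entries, each invertible over ℤ (determinant ±1), and suppose there exists k ≥ 1 such that every product A_{n+1}A_{n+2}⋯A_{n+k} of k consecutive matrices has all entries strictly positive. Then ‖A_1 A_2 ⋯ A_n‖ ≥ 2^{⌊n/k⌋ − 1} for all n ≥ k, where ‖·‖ is the sum of the entries. Consequently, there is a constant C = C(m,k) such that n / log‖A_1⋯A_n‖ ≤ C for all n ≥ 2k. -/
/-!
A nonnegative integer matrix with unit determinant is nonzero, so its entry sum is at least 1;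
left multiplication by a matrix whose entries are all at least 1 multiplies the entry sum of a
nonnegative matrix by at least `m ≥ 2`. Cutting `A₁⋯Aₙ` into `⌊n/k⌋` strictly positive blocks of
length `k` followed by a remainder gives `‖A₁⋯Aₙ‖ ≥ m ^ ⌊n/k⌋`, and taking logarithms bounds
`n / log ‖A₁⋯Aₙ‖` by `2k / log 2`.
-/

def blockProd {M : Type*} [Monoid M] (A : ℕ → M) (t n : ℕ) : M :=
  ((List.range n).map fun s => A (t + s)).prod

theorem blockProd_add {M : Type*} [Monoid M] (A : ℕ → M) (t a b : ℕ) :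
    blockProd A t (a + b) = blockProd A t a * blockProd A (t + a) b := by
  simp only [blockProd, List.range_add, List.map_append, List.map_map, List.prod_append,
    Function.comp_def, add_assoc]

theorem isUnit_blockProd {M : Type*} [Monoid M] {A : ℕ → M} (hA : ∀ t, IsUnit (A t))
    (t n : ℕ) : IsUnit (blockProd A t n) :=
  List.prod_isUnit <| by simp only [List.mem_map]; rintro _ ⟨s, -, rfl⟩; exact hA _

namespace Matrix

variable {n R : Type*} [Fintype n]

def entrySum [AddCommMonoid R] (M : Matrix n n R) : R :=
  ∑ i, ∑ j, M i j

section OrderedSemiring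

variable [Semiring R] [PartialOrder R] [IsOrderedRing R]

theorem mul_apply_nonneg {B X : Matrix n n R} (hB : ∀ i j, 0 ≤ B i j) (hX : ∀ i j, 0 ≤ X i j)
    (i j : n) : 0 ≤ (B * X) i j :=
  Finset.sum_nonneg fun l _ => mul_nonneg (hB i l) (hX l j)

theorem blockProd_apply_nonneg [DecidableEq n] {A : ℕ → Matrix n n R}
    (hA : ∀ t i j, 0 ≤ A t i j) (t m : ℕ) (i j : n) : 0 ≤ blockProd A t m i j := by
  refine List.prod_induction (fun M : Matrix n n R => ∀ i j, 0 ≤ M i j)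
    (fun _ _ => mul_apply_nonneg) (fun i j => ?_) ?_ i j
  · rw [one_apply]; split_ifs <;> simp
  · simp only [List.mem_map]; rintro _ ⟨s, -, rfl⟩; exact hA _

theorem card_nsmul_entrySum_le_entrySum_mul {B X : Matrix n n R} (hB : ∀ i j, 1 ≤ B i j)
    (hX : ∀ i j, 0 ≤ X i j) : Fintype.card n • entrySum X ≤ entrySum (B * X) := by
  refine Finset.card_nsmul_le_sum _ _ _ fun i _ => ?_
  calc entrySum X = ∑ j, ∑ l, X l j := Finset.sum_comm
    _ ≤ _ := Finset.sum_le_sum fun j _ => Finset.sum_le_sum fun l _ =>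
      le_mul_of_one_le_left (hX l j) (hB i l)

end OrderedSemiring

theorem one_le_entrySum {M : Matrix n n ℤ} (hM : ∀ i j, 0 ≤ M i j) (hM0 : M ≠ 0) :
    1 ≤ entrySum M := by
  obtain ⟨i, j, hij⟩ : ∃ i j, M i j ≠ 0 := by
    by_contra! h
    exact hM0 (ext h)
  calc 1 ≤ M i j := (hM i j).lt_of_ne' hij
    _ ≤ ∑ j, M i j := Finset.single_le_sum (fun l _ => hM i l) (Finset.mem_univ j)
    _ ≤ entrySum M := Finset.single_le_sum (fun l _ => Finset.sum_nonneg fun r _ => hM l r)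
          (Finset.mem_univ i)

theorem card_pow_le_entrySum_blockProd [DecidableEq n] [Nonempty n] {A : ℕ → Matrix n n ℤ}
    {k : ℕ} (hnn : ∀ t i j, 0 ≤ A t i j) (hunit : ∀ t, IsUnit (A t))
    (hpos : ∀ t i j, 0 < blockProd A t k i j) (q r t : ℕ) :
    (Fintype.card n : ℤ) ^ q ≤ entrySum (blockProd A t (k * q + r)) := by
  induction q generalizing t with
  | zero =>
    simpa using
      one_le_entrySum (blockProd_apply_nonneg hnn t r) (isUnit_blockProd hunit t r).ne_zero
  | succ q ih =>
    rw [show k * (q + 1) + r = k + (k * q + r) by ring, blockProd_add, pow_succ']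
    calc (Fintype.card n : ℤ) * Fintype.card n ^ q
        ≤ Fintype.card n • entrySum (blockProd A (t + k) (k * q + r)) := by
          rw [nsmul_eq_mul]; exact mul_le_mul_of_nonneg_left (ih _) (by positivity)
      _ ≤ _ := card_nsmul_entrySum_le_entrySum_mul (fun i j => hpos t i j)
          (blockProd_apply_nonneg hnn _ _)

end Matrix

theorem div_log_le_of_two_pow_div_le {n k : ℕ} {N : ℝ} (hk : 1 ≤ k) (hkn : k ≤ n)
    (hN : 2 ^ (n / k) ≤ N) : n / Real.log N ≤ 2 * k / Real.log 2 := by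
  have hq : 1 ≤ n / k := (Nat.one_le_div_iff hk).mpr hkn
  have hn : (n : ℝ) ≤ 2 * k * (n / k : ℕ) := by
    have := Nat.lt_mul_div_succ n hk
    exact_mod_cast (by nlinarith : n ≤ 2 * k * (n / k))
  have hlog2 : 0 < Real.log 2 := Real.log_pos one_lt_two
  have hlogN : (n / k : ℕ) * Real.log 2 ≤ Real.log N := by
    rw [← Real.log_pow]; exact Real.log_le_log (by positivity) hN
  have hq' : (1 : ℝ) ≤ (n / k : ℕ) := by exact_mod_cast hq
  rw [div_le_div_iff₀ (by nlinarith) hlog2]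
  calc (n : ℝ) * Real.log 2 ≤ 2 * k * ((n / k : ℕ) * Real.log 2) := by nlinarith
    _ ≤ 2 * k * Real.log N := by gcongr

/-- If `(A_n)` are nonnegative integer matrices invertible over `ℤ` and every product of
`k` consecutive matrices is strictly positive, then the norm (sum of entries) of
`A_1⋯A_n` grows at least like `2^{⌊n/k⌋-1}`, and consequently `n / log‖A_1⋯A_n‖` is
bounded. -/
theorem norm_product_exponential_growth {m k : ℕ} (hm : 2 ≤ m) (hk : 1 ≤ k)
    (A : ℕ → Matrix (Fin m) (Fin m) ℤ)
    (hnn : ∀ n i j, 0 ≤ A n i j)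
    (hdet : ∀ n, (A n).det = 1 ∨ (A n).det = -1)
    (hpos : ∀ n, ∀ i j : Fin m,
      0 < (((List.range k).map (fun s => A (n + 1 + s))).prod) i j) :
    (∀ n, k ≤ n →
      (2 : ℤ) ^ (n / k - 1) ≤
        ∑ i, ∑ j, (((List.range n).map (fun s => A (s + 1))).prod) i j) ∧
    ∃ C : ℝ, ∀ n, 2 * k ≤ n →
      (n : ℝ) /
        Real.log ((∑ i, ∑ j, (((List.range n).map (fun s => A (s + 1))).prod) i j : ℤ)) ≤
      C := by
  have : Nonempty (Fin m) := ⟨⟨0, by omega⟩⟩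
  have hgrowth (n : ℕ) :
      (2 : ℤ) ^ (n / k) ≤ ∑ i, ∑ j, (((List.range n).map (fun s => A (s + 1))).prod) i j := by
    have := Matrix.card_pow_le_entrySum_blockProd (A := fun s => A (s + 1)) (fun t => hnn _)
      (fun t => (Matrix.isUnit_iff_isUnit_det _).mpr (Int.isUnit_iff.mpr (hdet _)))
      (fun t i j => by simpa only [blockProd, add_right_comm] using hpos t i j) (n / k) (n % k) 0
    rw [Nat.div_add_mod, Fintype.card_fin] at this
    simpa only [blockProd, Matrix.entrySum, zero_add] using
      (pow_le_pow_left₀ zero_le_two (by exact_mod_cast hm) _).trans this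
  refine ⟨fun n _ => (pow_le_pow_right₀ one_le_two (Nat.sub_le _ _)).trans (hgrowth n),
    2 * k / Real.log 2, fun n hn => div_log_le_of_two_pow_div_le hk (by omega) ?_⟩
  exact_mod_cast hgrowth n
end
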